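/- arXiv:2503.06454 — 7 statements merged into one kernel-verified Lean document; each statement's English description precedes it below -/
import Mathlib

section
/- Let X ∈ ℝ^{M×N} satisfy the design assumption (A1) with constant λ̲ ∈ (0,1], and define the (un-normalized) model prior p(γ) = Γ(|γ|)⁻¹ (𝟙ᵀ(X_γᵀX_γ)⁻¹𝟙)^{1/2} det(X_γᵀX_γ)^{1/2} θ^{|γ|}(1−θ)^{N−|γ|} for γ ∈ S_L, where θ ∈ (0,1). Then for every nonempty γ ∈ S_L and every j ∉ γ with γ' = γ ∪ {j} ∈ S_L, the ratio satisfies √(M λ̲)/L ≤ (p(γ')/p(γ)) / (θ/(1−θ)) ≤ √(L M / λ̲). -/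
open Matrix MeasureTheory BigOperators

noncomputable section

/-- Submatrix `X_γ` of `X` consisting of the columns indexed by `γ` (in increasing order). -/
def subCols {M N : ℕ} (X : Matrix (Fin M) (Fin N) ℝ) (γ : Finset (Fin N)) :
    Matrix (Fin M) (Fin γ.card) ℝ :=
  Matrix.of fun i j => X i (γ.orderEmbOfFin rfl j)

/-- Gram matrix `X_γᵀ X_γ`. -/
def gram {M N : ℕ} (X : Matrix (Fin M) (Fin N) ℝ) (γ : Finset (Fin N)) :
    Matrix (Fin γ.card) (Fin γ.card) ℝ :=
  (subCols X γ)ᵀ * subCols X γ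

/-- `𝟙ᵀ (X_γᵀX_γ)⁻¹ 𝟙`. -/
def onesQuad {M N : ℕ} (X : Matrix (Fin M) (Fin N) ℝ) (γ : Finset (Fin N)) : ℝ :=
  (fun _ => (1 : ℝ)) ⬝ᵥ ((gram X γ)⁻¹ *ᵥ fun _ => (1 : ℝ))

/-- Design assumption (A1): every column of `X` has squared Euclidean norm `M`, and
`λ_min(X_γᵀX_γ) ≥ M·λ̲` for every model `γ` with `1 ≤ |γ| ≤ L`; the minimum-eigenvalue
condition is stated equivalently through the quadratic form of the (symmetric) Gram matrix. -/
def DesignA1 {M N : ℕ} (X : Matrix (Fin M) (Fin N) ℝ) (L : ℕ) (lam : ℝ) : Prop :=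
  (∀ j, (fun i => X i j) ⬝ᵥ (fun i => X i j) = (M : ℝ)) ∧
  (∀ γ : Finset (Fin N), 1 ≤ γ.card → γ.card ≤ L →
    ∀ v : Fin γ.card → ℝ, (M : ℝ) * lam * (v ⬝ᵥ v) ≤ v ⬝ᵥ ((gram X γ) *ᵥ v))

/-- The (un-normalized) model prior
`p(γ) = Γ(|γ|)⁻¹ (𝟙ᵀ(X_γᵀX_γ)⁻¹𝟙)^{1/2} det(X_γᵀX_γ)^{1/2} θ^{|γ|} (1-θ)^{N-|γ|}`,
where `Γ(ℓ) = (ℓ-1)!`. -/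
def priorWeight {M N : ℕ} (X : Matrix (Fin M) (Fin N) ℝ) (θ : ℝ) (γ : Finset (Fin N)) : ℝ :=
  ((γ.card - 1).factorial : ℝ)⁻¹ * Real.sqrt (onesQuad X γ) *
    Real.sqrt ((gram X γ).det) * θ ^ γ.card * (1 - θ) ^ (N - γ.card)

/-!
Write `G`, `G'` for the Gram matrices of `γ` and `γ' = γ ∪ {j}`, `d, d'` for their determinants,
`q, q'` for `𝟙ᵀG⁻¹𝟙, 𝟙ᵀG'⁻¹𝟙` and `k = |γ|`. The quotient in the statement is `√(q'd'/(qd)) / k`.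

Listing `j` last, `G'` is `G` bordered by `b = X_γᵀX_j` and `‖X_j‖² = M`, so `d' = d (M - bᵀG⁻¹b)`.
The Schur complement `M - bᵀG⁻¹b` is at most `M`, and at least `Mλ̲` because it is the value of
the quadratic form of `G'` at `(-G⁻¹b, 1)`, a vector of norm at least one. The variational formula
`uᵀG⁻¹u = max_v (2vᵀu - vᵀGv)` gives `q ≤ q'` (extend the maximizer for `G` by zero) and
`q ≥ 1/M` (take `v` a multiple of a basis vector, using `G_aa = M`), while `λ_min(G') ≥ Mλ̲` gives
`q' ≤ (k+1)/(Mλ̲)`. Hence `Mλ̲ ≤ q'd'/(qd) ≤ (k+1)M/λ̲`, and `1 ≤ k < L` finishes the proof.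
-/

section InverseQuadraticForm

variable {ι κ : Type*} [Fintype ι] [Fintype κ]

lemma mulVec_nonsing_inv_mulVec [DecidableEq ι] {G : Matrix ι ι ℝ} (hG : IsUnit G.det)
    (u : ι → ℝ) : G *ᵥ (G⁻¹ *ᵥ u) = u := by
  rw [mulVec_mulVec, mul_nonsing_inv _ hG, one_mulVec]

def RayleighLowerBound (G : Matrix ι ι ℝ) (μ : ℝ) : Prop :=
  ∀ v : ι → ℝ, μ * (v ⬝ᵥ v) ≤ v ⬝ᵥ (G *ᵥ v)

def onesInvQuad [DecidableEq ι] (G : Matrix ι ι ℝ) : ℝ :=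
  (fun _ => (1 : ℝ)) ⬝ᵥ (G⁻¹ *ᵥ fun _ => (1 : ℝ))

lemma RayleighLowerBound.submatrix_equiv {G : Matrix ι ι ℝ} {μ : ℝ}
    (h : RayleighLowerBound G μ) (e : κ ≃ ι) : RayleighLowerBound (G.submatrix e e) μ := by
  intro v
  simpa only [submatrix_mulVec_equiv, ← comp_equiv_symm_dotProduct, Function.comp_assoc,
    Equiv.self_comp_symm, Function.comp_id] using h (v ∘ e.symm)

lemma rayleighLowerBound_submatrix_equiv_iff {G : Matrix ι ι ℝ} {μ : ℝ} (e : κ ≃ ι) :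
    RayleighLowerBound (G.submatrix e e) μ ↔ RayleighLowerBound G μ :=
  ⟨fun h => by simpa using h.submatrix_equiv e.symm, fun h => h.submatrix_equiv e⟩

lemma RayleighLowerBound.posDef {G : Matrix ι ι ℝ} {μ : ℝ} (h : RayleighLowerBound G μ)
    (hG : G.IsHermitian) (hμ : 0 < μ) : G.PosDef := by
  refine .of_dotProduct_mulVec_pos hG fun v hv => ?_
  have hvv : 0 < v ⬝ᵥ v := dotProduct_self_star_pos_iff.mpr hv
  simpa using (mul_pos hμ hvv).trans_le (h v)

lemma onesInvQuad_submatrix_equiv [DecidableEq ι] [DecidableEq κ] (G : Matrix ι ι ℝ)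
    (e : κ ≃ ι) : onesInvQuad (G.submatrix e e) = onesInvQuad G := by
  rw [onesInvQuad, inv_submatrix_equiv, submatrix_mulVec_equiv, ← comp_equiv_symm_dotProduct]
  rfl

lemma two_mul_dotProduct_sub_le_dotProduct_inv_mulVec [DecidableEq ι] {G : Matrix ι ι ℝ}
    (hG : G.PosDef) (u v : ι → ℝ) : 2 * (v ⬝ᵥ u) - v ⬝ᵥ (G *ᵥ v) ≤ u ⬝ᵥ (G⁻¹ *ᵥ u) := by
  set w := G⁻¹ *ᵥ u
  have hGw : G *ᵥ w = u := mulVec_nonsing_inv_mulVec hG.det_pos.ne'.isUnit u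
  have hT : Gᵀ = G := by simpa [conjTranspose_eq_transpose_of_trivial] using hG.isHermitian.eq
  have hsymm : w ⬝ᵥ (G *ᵥ v) = v ⬝ᵥ (G *ᵥ w) := by
    rw [dotProduct_mulVec, ← mulVec_transpose, hT, dotProduct_comm]
  have hnonneg := hG.posSemidef.dotProduct_mulVec_nonneg (w - v)
  simp only [star_trivial, mulVec_sub, dotProduct_sub, sub_dotProduct, hsymm, hGw] at hnonneg
  rw [dotProduct_comm u w]
  linarith

lemma dotProduct_inv_mulVec_le [DecidableEq ι] {G : Matrix ι ι ℝ} {μ : ℝ}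
    (h : RayleighLowerBound G μ) (hμ : 0 < μ) (hG : IsUnit G.det) (u : ι → ℝ) :
    u ⬝ᵥ (G⁻¹ *ᵥ u) ≤ (u ⬝ᵥ u) / μ := by
  set w := G⁻¹ *ᵥ u
  have hw := h w
  rw [mulVec_nonsing_inv_mulVec hG u] at hw
  -- AM-GM: `0 ≤ ‖μ w - u‖²`
  have hsq := dotProduct_self_star_nonneg (μ • w - u)
  simp only [star_trivial, dotProduct_sub, sub_dotProduct, dotProduct_smul, smul_dotProduct,
    smul_eq_mul, dotProduct_comm u w] at hsq
  rw [le_div_iff₀ hμ, dotProduct_comm]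
  nlinarith

lemma sq_div_diag_le_dotProduct_inv_mulVec [DecidableEq ι] {G : Matrix ι ι ℝ} (hG : G.PosDef)
    (u : ι → ℝ) (a : ι) : u a ^ 2 / G a a ≤ u ⬝ᵥ (G⁻¹ *ᵥ u) := by
  have hGa := hG.diag_pos (i := a)
  convert two_mul_dotProduct_sub_le_dotProduct_inv_mulVec hG u (Pi.single a (u a / G a a))
    using 1
  simp [single_dotProduct, mulVec_single]
  field_simp
  ring

end InverseQuadraticForm

section Bordered

lemma sumElim_one_one {m : Type*} :
    Sum.elim (fun _ : m => (1 : ℝ)) (fun _ : Unit => 1) = fun _ => 1 :=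
  Sum.elim_const_const 1

variable {m : Type*} [Fintype m]

def bordered (A : Matrix m m ℝ) (b : m → ℝ) (c : ℝ) : Matrix (m ⊕ Unit) (m ⊕ Unit) ℝ :=
  fromBlocks A (replicateCol Unit b) (replicateRow Unit b) (of fun _ _ => c)

variable {A : Matrix m m ℝ} {b : m → ℝ} {c : ℝ}

lemma bordered_mulVec (v : m → ℝ) (x : ℝ) :
    bordered A b c *ᵥ Sum.elim v (fun _ => x) =
      Sum.elim (A *ᵥ v + x • b) (fun _ => b ⬝ᵥ v + c * x) := by
  ext (i | u) <;> simp [bordered, mulVec, dotProduct, mul_comm]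

lemma sumElim_dotProduct_sumElim_unit (v y : m → ℝ) (x z : ℝ) :
    Sum.elim v (fun _ : Unit => x) ⬝ᵥ Sum.elim y (fun _ => z) = v ⬝ᵥ y + x * z := by
  simp [dotProduct]

lemma det_bordered [DecidableEq m] (hA : IsUnit A.det) :
    (bordered A b c).det = A.det * (c - b ⬝ᵥ (A⁻¹ *ᵥ b)) := by
  let := invertibleOfIsUnitDet A hA
  rw [bordered, det_fromBlocks₁₁, invOf_eq_nonsing_inv, det_unique (n := Unit), Matrix.mul_assoc,
    ← replicateCol_mulVec, replicateRow_mul_replicateCol]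
  rfl

lemma sub_dotProduct_inv_mulVec_le [DecidableEq m] (hA : A.PosDef) :
    c - b ⬝ᵥ (A⁻¹ *ᵥ b) ≤ c := by
  have := hA.posSemidef.inv.dotProduct_mulVec_nonneg b
  rw [star_trivial] at this
  linarith

lemma le_sub_dotProduct_inv_mulVec [DecidableEq m] {μ : ℝ}
    (h : RayleighLowerBound (bordered A b c) μ) (hμ : 0 ≤ μ) (hA : IsUnit A.det) :
    μ ≤ c - b ⬝ᵥ (A⁻¹ *ᵥ b) := by
  have hw := h (Sum.elim (-(A⁻¹ *ᵥ b)) fun _ => 1)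
  simp only [bordered_mulVec, mulVec_neg, mulVec_nonsing_inv_mulVec hA, one_smul, neg_add_cancel,
    sumElim_dotProduct_sumElim_unit, dotProduct_neg, neg_dotProduct, neg_neg, dotProduct_zero] at hw
  have hnonneg := dotProduct_self_star_nonneg (A⁻¹ *ᵥ b)
  rw [star_trivial] at hnonneg
  nlinarith

lemma onesInvQuad_le_onesInvQuad_bordered [DecidableEq m] (hB : (bordered A b c).PosDef)
    (hA : IsUnit A.det) : onesInvQuad A ≤ onesInvQuad (bordered A b c) := by
  have key := two_mul_dotProduct_sub_le_dotProduct_inv_mulVec hB (fun _ => 1)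
    (Sum.elim (A⁻¹ *ᵥ fun _ => 1) fun _ => 0)
  rw [onesInvQuad, onesInvQuad]
  convert key using 1
  rw [bordered_mulVec, mulVec_nonsing_inv_mulVec hA, ← sumElim_one_one,
    sumElim_dotProduct_sumElim_unit, sumElim_dotProduct_sumElim_unit]
  simp [dotProduct_comm]
  ring

end Bordered

section PrincipalSubmatrix

variable {n : Type*}

def principalSubmatrix (A : Matrix n n ℝ) (s : Finset n) : Matrix s s ℝ :=
  A.submatrix (↑) (↑)

variable [DecidableEq n]

def insertSumEquiv {s : Finset n} {j : n} (hj : j ∉ s) : s ⊕ Unit ≃ ↥(insert j s) :=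
  ((Finset.subtypeInsertEquivOption hj).trans (Equiv.optionEquivSumPUnit s)).symm

lemma principalSubmatrix_insert {A : Matrix n n ℝ} (hA : A.IsSymm) {s : Finset n} {j : n}
    (hj : j ∉ s) :
    (principalSubmatrix A (insert j s)).submatrix (insertSumEquiv hj) (insertSumEquiv hj) =
      bordered (principalSubmatrix A s) (fun a => A a j) (A j j) := by
  ext (a | _) (b | _)
  exacts [rfl, rfl, hA.apply _ _, rfl]

end PrincipalSubmatrix

section Gram

variable {M N : ℕ}

lemma gram_eq_submatrix (X : Matrix (Fin M) (Fin N) ℝ) (γ : Finset (Fin N)) :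
    gram X γ = (principalSubmatrix (Xᵀ * X) γ).submatrix (γ.orderIsoOfFin rfl).toEquiv
      (γ.orderIsoOfFin rfl).toEquiv := by
  ext a b
  simp [_root_.gram, subCols, principalSubmatrix, Matrix.mul_apply]

lemma det_gram_eq (X : Matrix (Fin M) (Fin N) ℝ) (γ : Finset (Fin N)) :
    (gram X γ).det = (principalSubmatrix (Xᵀ * X) γ).det := by
  rw [gram_eq_submatrix, det_submatrix_equiv_self]

lemma onesQuad_eq_onesInvQuad (X : Matrix (Fin M) (Fin N) ℝ) (γ : Finset (Fin N)) :
    onesQuad X γ = onesInvQuad (principalSubmatrix (Xᵀ * X) γ) := by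
  rw [← onesInvQuad_submatrix_equiv _ (γ.orderIsoOfFin rfl).toEquiv, ← gram_eq_submatrix]
  rfl

lemma priorWeight_eq_zero (X : Matrix (Fin 0) (Fin N) ℝ) (θ : ℝ) {γ : Finset (Fin N)}
    (hγ : γ.Nonempty) : priorWeight X θ γ = 0 := by
  have : Nonempty (Fin γ.card) := ⟨⟨0, hγ.card_pos⟩⟩
  have hzero : gram X γ = 0 := by ext; simp [_root_.gram, Matrix.mul_apply]
  simp [priorWeight, hzero]

lemma priorWeight_insert_div (X : Matrix (Fin M) (Fin N) ℝ) {θ : ℝ} (hθ0 : 0 < θ)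
    (hθ1 : θ < 1) {γ : Finset (Fin N)} {j : Fin N} (hj : j ∉ γ) (hγ1 : 1 ≤ γ.card)
    (hq : 0 < onesQuad X γ) (hq' : 0 ≤ onesQuad X (insert j γ)) (hd : 0 < (gram X γ).det) :
    priorWeight X θ (insert j γ) / priorWeight X θ γ / (θ / (1 - θ)) =
      √(onesQuad X (insert j γ) / onesQuad X γ * ((gram X (insert j γ)).det / (gram X γ).det)) /
        γ.card := by
  have hcard := Finset.card_insert_of_notMem hj
  have hN : γ.card + 1 ≤ N := hcard ▸ (Finset.card_le_univ _).trans_eq (Fintype.card_fin N)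
  obtain ⟨k, hk⟩ := Nat.exists_eq_add_of_le' hγ1
  obtain ⟨r, hr⟩ := Nat.exists_eq_add_of_le hN
  rw [priorWeight, priorWeight, Real.sqrt_mul (div_nonneg hq' hq.le), Real.sqrt_div' _ hq.le,
    Real.sqrt_div' _ hd.le]
  generalize onesQuad X γ = q, onesQuad X (insert j γ) = q', (gram X γ).det = d,
    (gram X (insert j γ)).det = d' at *
  rw [hcard, show N - (γ.card + 1) = r by omega, show N - γ.card = r + 1 by omega, hk]
  simp only [Nat.add_sub_cancel, Nat.factorial_succ]
  have : (1 : ℝ) - θ ≠ 0 := by linarith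
  field_simp
  push_cast
  ring

end Gram

namespace DesignA1

variable {M N L : ℕ} {X : Matrix (Fin M) (Fin N) ℝ} {lam : ℝ} {γ : Finset (Fin N)} {j : Fin N}

lemma transpose_mul_self_apply_self (hA1 : DesignA1 X L lam) (j : Fin N) : (Xᵀ * X) j j = M :=
  hA1.1 j

lemma rayleighLowerBound_principalSubmatrix (hA1 : DesignA1 X L lam) (h1 : 1 ≤ γ.card)
    (hL : γ.card ≤ L) : RayleighLowerBound (principalSubmatrix (Xᵀ * X) γ) (M * lam) := by
  rw [← rayleighLowerBound_submatrix_equiv_iff (γ.orderIsoOfFin rfl).toEquiv, ← gram_eq_submatrix]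
  exact hA1.2 γ h1 hL

lemma posDef_principalSubmatrix (hA1 : DesignA1 X L lam) (hMl : 0 < M * lam) (h1 : 1 ≤ γ.card)
    (hL : γ.card ≤ L) : (principalSubmatrix (Xᵀ * X) γ).PosDef := by
  refine (hA1.rayleighLowerBound_principalSubmatrix h1 hL).posDef (.submatrix ?_ _) hMl
  simpa [conjTranspose_eq_transpose_of_trivial] using isHermitian_conjTranspose_mul_self X

lemma posDef_gram (hA1 : DesignA1 X L lam) (hMl : 0 < M * lam) (h1 : 1 ≤ γ.card)
    (hL : γ.card ≤ L) : (gram X γ).PosDef := by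
  rw [gram_eq_submatrix]
  exact (hA1.posDef_principalSubmatrix hMl h1 hL).submatrix (Equiv.injective _)

lemma principalSubmatrix_insert_eq_bordered (hA1 : DesignA1 X L lam) (hj : j ∉ γ) :
    (principalSubmatrix (Xᵀ * X) (insert j γ)).submatrix (insertSumEquiv hj) (insertSumEquiv hj) =
      bordered (principalSubmatrix (Xᵀ * X) γ) (fun a => (Xᵀ * X) a j) M := by
  rw [principalSubmatrix_insert (by simp [IsSymm, transpose_mul]),
    hA1.transpose_mul_self_apply_self]

lemma det_gram_insert_bounds (hA1 : DesignA1 X L lam) (hMl : 0 < M * lam) (hj : j ∉ γ)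
    (hγ1 : 1 ≤ γ.card) (hγ'L : (insert j γ).card ≤ L) :
    M * lam * (gram X γ).det ≤ (gram X (insert j γ)).det ∧
      (gram X (insert j γ)).det ≤ M * (gram X γ).det := by
  have hγL : γ.card ≤ L := (Finset.card_le_card (Finset.subset_insert j γ)).trans hγ'L
  have hP := hA1.posDef_principalSubmatrix hMl hγ1 hγL
  have hB : RayleighLowerBound (bordered (principalSubmatrix (Xᵀ * X) γ)
      (fun a => (Xᵀ * X) a j) M) (M * lam) := by
    rw [← hA1.principalSubmatrix_insert_eq_bordered hj, rayleighLowerBound_submatrix_equiv_iff]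
    exact hA1.rayleighLowerBound_principalSubmatrix (Finset.card_pos.2 ⟨j, by simp⟩) hγ'L
  have hdet := det_bordered (A := principalSubmatrix (Xᵀ * X) γ) (b := fun a => (Xᵀ * X) a j)
    (c := M) hP.det_pos.ne'.isUnit
  rw [← hA1.principalSubmatrix_insert_eq_bordered hj, det_submatrix_equiv_self] at hdet
  rw [det_gram_eq, det_gram_eq, hdet]
  have hlow := le_sub_dotProduct_inv_mulVec hB hMl.le hP.det_pos.ne'.isUnit
  have hup := sub_dotProduct_inv_mulVec_le (b := fun a : γ => (Xᵀ * X) a j) (c := (M : ℝ)) hP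
  constructor <;> nlinarith [hP.det_pos]

lemma onesQuad_le_onesQuad_insert (hA1 : DesignA1 X L lam) (hMl : 0 < M * lam) (hj : j ∉ γ)
    (hγ1 : 1 ≤ γ.card) (hγ'L : (insert j γ).card ≤ L) :
    onesQuad X γ ≤ onesQuad X (insert j γ) := by
  have hγL : γ.card ≤ L := (Finset.card_le_card (Finset.subset_insert j γ)).trans hγ'L
  have hB := (hA1.posDef_principalSubmatrix hMl (Finset.card_pos.2 ⟨j, by simp⟩) hγ'L).submatrix
    (insertSumEquiv hj).injective
  rw [hA1.principalSubmatrix_insert_eq_bordered hj] at hB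
  rw [onesQuad_eq_onesInvQuad, onesQuad_eq_onesInvQuad,
    ← onesInvQuad_submatrix_equiv _ (insertSumEquiv hj),
    hA1.principalSubmatrix_insert_eq_bordered hj]
  exact onesInvQuad_le_onesInvQuad_bordered hB
    (hA1.posDef_principalSubmatrix hMl hγ1 hγL).det_pos.ne'.isUnit

lemma onesQuad_le_card_div (hA1 : DesignA1 X L lam) (hMl : 0 < M * lam) (h1 : 1 ≤ γ.card)
    (hL : γ.card ≤ L) : onesQuad X γ ≤ γ.card / (M * lam) := by
  refine (dotProduct_inv_mulVec_le (hA1.2 γ h1 hL) hMl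
    (hA1.posDef_gram hMl h1 hL).det_pos.ne'.isUnit (fun _ => 1)).trans_eq ?_
  simp [dotProduct]

lemma inv_le_onesQuad (hA1 : DesignA1 X L lam) (hMl : 0 < M * lam) (h1 : 1 ≤ γ.card)
    (hL : γ.card ≤ L) : (M : ℝ)⁻¹ ≤ onesQuad X γ := by
  have := sq_div_diag_le_dotProduct_inv_mulVec (hA1.posDef_gram hMl h1 hL) (fun _ => 1) ⟨0, h1⟩
  rwa [gram_eq_submatrix, submatrix_apply, principalSubmatrix, submatrix_apply,
    hA1.transpose_mul_self_apply_self, one_pow, one_div] at this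

lemma insert_ratio_bounds (hA1 : DesignA1 X L lam) (hM : (0 : ℝ) < M) (hlam : 0 < lam)
    (hj : j ∉ γ) (hγ1 : 1 ≤ γ.card) (hγ'L : (insert j γ).card ≤ L) :
    let Q := onesQuad X (insert j γ) / onesQuad X γ * ((gram X (insert j γ)).det / (gram X γ).det)
    M * lam ≤ Q ∧ Q ≤ L * M / lam := by
  intro Q
  have hcard := Finset.card_insert_of_notMem hj
  have hγL : γ.card ≤ L := by omega
  have hMl := mul_pos hM hlam
  have hd := (hA1.posDef_gram hMl hγ1 hγL).det_pos
  have hq := hA1.inv_le_onesQuad hMl hγ1 hγL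
  have hqq' := hA1.onesQuad_le_onesQuad_insert hMl hj hγ1 hγ'L
  have hq' := hA1.onesQuad_le_card_div hMl (by omega) hγ'L
  obtain ⟨hdlow, hdup⟩ := hA1.det_gram_insert_bounds hMl hj hγ1 hγ'L
  rw [hcard, Nat.cast_add_one] at hq'
  have hkL : (γ.card : ℝ) + 1 ≤ L := by exact_mod_cast hcard ▸ hγ'L
  have hqpos : 0 < onesQuad X γ := (inv_pos.2 hM).trans_le hq
  have hq'pos : 0 ≤ onesQuad X (insert j γ) := hqpos.le.trans hqq'
  have hMq : 1 ≤ onesQuad X γ * M := by rwa [inv_le_iff_one_le_mul₀ hM] at hq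
  have hqratio : onesQuad X (insert j γ) / onesQuad X γ ≤ onesQuad X (insert j γ) * M := by
    rw [div_le_iff₀ hqpos]
    nlinarith
  constructor
  · calc (M : ℝ) * lam = 1 * (M * lam) := (one_mul _).symm
      _ ≤ Q := mul_le_mul ((one_le_div hqpos).2 hqq') ((le_div_iff₀ hd).2 hdlow) hMl.le
          (div_nonneg hq'pos hqpos.le)
  · calc Q ≤ (onesQuad X (insert j γ) * M) * M :=
          mul_le_mul hqratio ((div_le_iff₀ hd).2 hdup)
            (div_nonneg ((mul_pos hMl hd).le.trans hdlow) hd.le) (by positivity)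
      _ ≤ ((γ.card + 1) / (M * lam) * M) * M := by gcongr
      _ = (γ.card + 1) * M / lam := by field_simp
      _ ≤ L * M / lam := by gcongr

end DesignA1

theorem statement_0_general {M N L : ℕ} (X : Matrix (Fin M) (Fin N) ℝ) (lam θ : ℝ)
    (hlam0 : 0 < lam) (hθ0 : 0 < θ) (hθ1 : θ < 1)
    (hA1 : DesignA1 X L lam)
    (γ : Finset (Fin N)) (j : Fin N) (hj : j ∉ γ)
    (hγ1 : 1 ≤ γ.card) (hγ'L : (insert j γ).card ≤ L) :
    Real.sqrt ((M : ℝ) * lam) / L ≤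
        (priorWeight X θ (insert j γ) / priorWeight X θ γ) / (θ / (1 - θ)) ∧
      (priorWeight X θ (insert j γ) / priorWeight X θ γ) / (θ / (1 - θ)) ≤
        Real.sqrt ((L : ℝ) * M / lam) := by
  rcases Nat.eq_zero_or_pos M with rfl | hM
  · simp [priorWeight_eq_zero X θ (Finset.insert_nonempty j γ)]
  have hM' : (0 : ℝ) < M := Nat.cast_pos.2 hM
  have hMl := mul_pos hM' hlam0
  have hγL : γ.card ≤ L := (Finset.card_le_card (Finset.subset_insert j γ)).trans hγ'L
  have hq := (inv_pos.2 hM').trans_le (hA1.inv_le_onesQuad hMl hγ1 hγL)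
  rw [priorWeight_insert_div X hθ0 hθ1 hj hγ1 hq
    (hq.le.trans (hA1.onesQuad_le_onesQuad_insert hMl hj hγ1 hγ'L))
    (hA1.posDef_gram hMl hγ1 hγL).det_pos]
  obtain ⟨hlow, hup⟩ := hA1.insert_ratio_bounds hM' hlam0 hj hγ1 hγ'L
  have hk : (1 : ℝ) ≤ γ.card := by exact_mod_cast hγ1
  constructor
  · gcongr
  · exact (div_le_self (Real.sqrt_nonneg _) hk).trans (Real.sqrt_le_sqrt hup)

/-- Lemma S1: under (A1), for every nonempty `γ ∈ S_L` and `j ∉ γ` with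
`γ' = γ ∪ {j} ∈ S_L`, `√(Mλ̲)/L ≤ (p(γ')/p(γ))/(θ/(1-θ)) ≤ √(LM/λ̲)`. -/
theorem statement_0 {M N L : ℕ} (X : Matrix (Fin M) (Fin N) ℝ) (lam θ : ℝ)
    (hlam0 : 0 < lam) (hlam1 : lam ≤ 1) (hθ0 : 0 < θ) (hθ1 : θ < 1)
    (hA1 : DesignA1 X L lam)
    (γ : Finset (Fin N)) (j : Fin N) (hj : j ∉ γ)
    (hγ1 : 1 ≤ γ.card) (hγ'L : (insert j γ).card ≤ L) :
    Real.sqrt ((M : ℝ) * lam) / L ≤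
        (priorWeight X θ (insert j γ) / priorWeight X θ γ) / (θ / (1 - θ)) ∧
      (priorWeight X θ (insert j γ) / priorWeight X θ γ) / (θ / (1 - θ)) ≤
        Real.sqrt ((L : ℝ) * M / lam) :=
  statement_0_general X lam θ hlam0 hθ0 hθ1 hA1 γ j hj hγ1 hγ'L
end
end

section
/- Let X ∈ ℝ^{M×N} satisfy the design assumption (A1) with constant λ̲ ∈ (0,1]. Then for any γ, γ' ∈ S_L with ∅ ≠ γ ⊆ γ', the quadratic forms satisfy |γ'|/(M λ̲) ≥ 𝟙ᵀ(X_{γ'}ᵀX_{γ'})⁻¹𝟙 ≥ 𝟙ᵀ(X_γᵀX_γ)⁻¹𝟙 ≥ 1/M. -/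
open Matrix MeasureTheory BigOperators

noncomputable section

/-! With `A = X_γ`, `G = AᵀA` invertible and `u = G⁻¹𝟙`, one has `(Au) ⬝ (Av) = 𝟙 ⬝ v` for all
`v`, hence `𝟙ᵀG⁻¹𝟙 = ‖Au‖² = max_v (2·𝟙ᵀv - ‖Av‖²)`. Deleting columns of `A` only shrinks the set
over which this maximum is taken, which gives monotonicity in `γ`. The upper bound combines
coercivity `Mλ̲‖u‖² ≤ ‖Au‖² = 𝟙ᵀu` with `(𝟙ᵀu)² ≤ |γ'|‖u‖²`; the lower bound is Cauchy–Schwarz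
`(𝟙ᵀ𝟙)² ≤ (𝟙ᵀG⁻¹𝟙)(𝟙ᵀG𝟙)` together with `G_{jk} ≤ M` for columns of squared norm `M`. -/

section GramQuadraticForm

variable {m n n' : Type*} [Fintype m] [Fintype n] [DecidableEq n] [Fintype n'] [DecidableEq n']

omit [DecidableEq n] in
lemma sq_dotProduct_le (v w : n → ℝ) : (v ⬝ᵥ w) ^ 2 ≤ (v ⬝ᵥ v) * (w ⬝ᵥ w) := by
  simpa [dotProduct, sq] using Finset.sum_mul_sq_le_sq_mul_sq Finset.univ v w

omit [DecidableEq n] in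
lemma dotProduct_transpose_mul_self_mulVec (A : Matrix m n ℝ) (v w : n → ℝ) :
    v ⬝ᵥ ((Aᵀ * A) *ᵥ w) = (A *ᵥ v) ⬝ᵥ (A *ᵥ w) := by
  rw [← mulVec_mulVec, dotProduct_mulVec, vecMul_transpose]

lemma isUnit_det_of_le_dotProduct_mulVec {G : Matrix n n ℝ} {c : ℝ} (hc : 0 < c)
    (hG : ∀ v, c * (v ⬝ᵥ v) ≤ v ⬝ᵥ (G *ᵥ v)) : IsUnit G.det := by
  rw [isUnit_iff_ne_zero, Ne, ← exists_mulVec_eq_zero_iff]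
  rintro ⟨v, hv0, hv⟩
  have := hG v
  rw [hv, dotProduct_zero] at this
  exact hv0 (dotProduct_self_eq_zero.1 (le_antisymm (nonpos_of_mul_nonpos_right this hc)
    (dotProduct_self_star_nonneg v)))

lemma dotProduct_inv_mulVec_le_div {G : Matrix n n ℝ} {c : ℝ} (hc : 0 < c)
    (hG : ∀ v, c * (v ⬝ᵥ v) ≤ v ⬝ᵥ (G *ᵥ v)) (w : n → ℝ) :
    w ⬝ᵥ (G⁻¹ *ᵥ w) ≤ (w ⬝ᵥ w) / c := by
  set u := G⁻¹ *ᵥ w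
  have hGu : G *ᵥ u = w := by
    rw [mulVec_mulVec, mul_nonsing_inv _ (isUnit_det_of_le_dotProduct_mulVec hc hG), one_mulVec]
  have hcu : c * (u ⬝ᵥ u) ≤ w ⬝ᵥ u := by simpa [hGu, dotProduct_comm] using hG u
  have hcs := sq_dotProduct_le w u
  have hww : 0 ≤ w ⬝ᵥ w := dotProduct_self_star_nonneg w
  rw [le_div_iff₀ hc]
  rcases le_or_gt (w ⬝ᵥ u) 0 with hq | hq
  · nlinarith
  · nlinarith [mul_le_mul_of_nonneg_left hcu hww]

lemma mulVec_inv_mulVec_dotProduct_mulVec {A : Matrix m n ℝ} (hA : IsUnit (Aᵀ * A).det)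
    (w v : n → ℝ) : (A *ᵥ ((Aᵀ * A)⁻¹ *ᵥ w)) ⬝ᵥ (A *ᵥ v) = w ⬝ᵥ v := by
  rw [dotProduct_comm, ← dotProduct_transpose_mul_self_mulVec, mulVec_mulVec,
    mul_nonsing_inv _ hA, one_mulVec, dotProduct_comm]

lemma dotProduct_inv_mulVec_eq {A : Matrix m n ℝ} (hA : IsUnit (Aᵀ * A).det) (w : n → ℝ) :
    w ⬝ᵥ ((Aᵀ * A)⁻¹ *ᵥ w) =
      (A *ᵥ ((Aᵀ * A)⁻¹ *ᵥ w)) ⬝ᵥ (A *ᵥ ((Aᵀ * A)⁻¹ *ᵥ w)) :=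
  (mulVec_inv_mulVec_dotProduct_mulVec hA w _).symm

lemma two_mul_dotProduct_sub_le {A : Matrix m n ℝ} (hA : IsUnit (Aᵀ * A).det) (w v : n → ℝ) :
    2 * (w ⬝ᵥ v) - (A *ᵥ v) ⬝ᵥ (A *ᵥ v) ≤ w ⬝ᵥ ((Aᵀ * A)⁻¹ *ᵥ w) := by
  set u := (Aᵀ * A)⁻¹ *ᵥ w
  have hsq : 0 ≤ (A *ᵥ (u - v)) ⬝ᵥ (A *ᵥ (u - v)) := dotProduct_self_star_nonneg _
  have huv := mulVec_inv_mulVec_dotProduct_mulVec hA w v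
  rw [mulVec_sub, sub_dotProduct, dotProduct_sub, dotProduct_sub, huv, dotProduct_comm (A *ᵥ v),
    huv, ← dotProduct_inv_mulVec_eq hA] at hsq
  linarith

lemma dotProduct_inv_mulVec_submatrix_le {A : Matrix m n' ℝ} (hA : IsUnit (Aᵀ * A).det)
    (ι : n → n') (hB : IsUnit ((A.submatrix id ι)ᵀ * A.submatrix id ι).det) (w : n' → ℝ) :
    (w ∘ ι) ⬝ᵥ (((A.submatrix id ι)ᵀ * A.submatrix id ι)⁻¹ *ᵥ (w ∘ ι)) ≤
      w ⬝ᵥ ((Aᵀ * A)⁻¹ *ᵥ w) := by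
  set P : Matrix n' n ℝ := (1 : Matrix n' n' ℝ).submatrix id ι
  have hAP : A.submatrix id ι = A * P := by ext; simp [P, mul_apply, one_apply]
  have hwP : w ∘ ι = w ᵥ* P := by ext; simp [P, vecMul, dotProduct, one_apply]
  set u := ((A.submatrix id ι)ᵀ * A.submatrix id ι)⁻¹ *ᵥ (w ∘ ι)
  calc (w ∘ ι) ⬝ᵥ u
        = 2 * ((w ∘ ι) ⬝ᵥ u) - (A.submatrix id ι *ᵥ u) ⬝ᵥ (A.submatrix id ι *ᵥ u) := by
        rw [← dotProduct_inv_mulVec_eq hB]; ring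
    _ = 2 * (w ⬝ᵥ (P *ᵥ u)) - (A *ᵥ (P *ᵥ u)) ⬝ᵥ (A *ᵥ (P *ᵥ u)) := by
        rw [dotProduct_mulVec w P u, ← hwP, mulVec_mulVec u A P, ← hAP]
    _ ≤ w ⬝ᵥ ((Aᵀ * A)⁻¹ *ᵥ w) := two_mul_dotProduct_sub_le hA w _

lemma sq_dotProduct_self_le {A : Matrix m n ℝ} (hA : IsUnit (Aᵀ * A).det) (w : n → ℝ) :
    (w ⬝ᵥ w) ^ 2 ≤ (w ⬝ᵥ ((Aᵀ * A)⁻¹ *ᵥ w)) * (w ⬝ᵥ ((Aᵀ * A) *ᵥ w)) := by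
  rw [← mulVec_inv_mulVec_dotProduct_mulVec hA w w, dotProduct_inv_mulVec_eq hA,
    dotProduct_transpose_mul_self_mulVec]
  exact sq_dotProduct_le _ _

omit [Fintype n] [DecidableEq n] in
lemma transpose_mul_self_apply_le {A : Matrix m n ℝ} {s : ℝ}
    (hcol : ∀ j, (fun i => A i j) ⬝ᵥ (fun i => A i j) = s) (j k : n) : (Aᵀ * A) j k ≤ s := by
  have hcs := sq_dotProduct_le (fun i => A i j) (fun i => A i k)
  rw [hcol, hcol] at hcs
  have hs : 0 ≤ s := hcol j ▸ dotProduct_self_star_nonneg _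
  change (fun i => A i j) ⬝ᵥ (fun i => A i k) ≤ s
  exact le_of_sq_le_sq (by linarith) hs

omit [DecidableEq n] in
lemma one_dotProduct_transpose_mul_self_mulVec_one_le {A : Matrix m n ℝ} {s : ℝ}
    (hcol : ∀ j, (fun i => A i j) ⬝ᵥ (fun i => A i j) = s) :
    1 ⬝ᵥ ((Aᵀ * A) *ᵥ 1) ≤ (Fintype.card n : ℝ) ^ 2 * s := by
  calc 1 ⬝ᵥ ((Aᵀ * A) *ᵥ 1) = ∑ j, ∑ k, (Aᵀ * A) j k := by
        simp [dotProduct, mulVec]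
    _ ≤ ∑ _j : n, ∑ _k : n, s := by
        gcongr with j _ k _
        exact transpose_mul_self_apply_le hcol j k
    _ = (Fintype.card n : ℝ) ^ 2 * s := by simp [sq, mul_assoc]

lemma one_div_le_one_dotProduct_inv_mulVec_one [Nonempty n] {A : Matrix m n ℝ}
    (hA : IsUnit (Aᵀ * A).det) {s : ℝ} (hs : 0 < s)
    (hcol : ∀ j, (fun i => A i j) ⬝ᵥ (fun i => A i j) = s) :
    1 / s ≤ 1 ⬝ᵥ ((Aᵀ * A)⁻¹ *ᵥ 1) := by
  have hq : 0 ≤ (1 : n → ℝ) ⬝ᵥ ((Aᵀ * A)⁻¹ *ᵥ 1) := by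
    rw [dotProduct_inv_mulVec_eq hA]; exact dotProduct_self_star_nonneg _
  set q := (1 : n → ℝ) ⬝ᵥ ((Aᵀ * A)⁻¹ *ᵥ 1)
  have hk : 0 < (Fintype.card n : ℝ) := by exact_mod_cast Fintype.card_pos
  have hcs := sq_dotProduct_self_le hA 1
  have hG := one_dotProduct_transpose_mul_self_mulVec_one_le hcol
  simp only [dotProduct_one, Pi.one_apply, Finset.sum_const, Finset.card_univ,
    nsmul_eq_mul, mul_one] at hcs
  rw [div_le_iff₀ hs]
  have : (Fintype.card n : ℝ) ^ 2 * 1 ≤ (Fintype.card n : ℝ) ^ 2 * (q * s) := by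
    nlinarith [mul_le_mul_of_nonneg_left hG hq]
  exact le_of_mul_le_mul_left this (by positivity)

end GramQuadraticForm

lemma Finset.exists_orderEmbOfFin_comp_eq {α : Type*} [LinearOrder α] {s t : Finset α}
    (hst : s ⊆ t) :
    ∃ ι : Fin s.card → Fin t.card, ∀ j, t.orderEmbOfFin rfl (ι j) = s.orderEmbOfFin rfl j := by
  refine ⟨fun j => (t.orderIsoOfFin rfl).symm ⟨_, hst (s.orderEmbOfFin_mem rfl j)⟩, fun j => ?_⟩
  rw [← coe_orderIsoOfFin_apply, OrderIso.apply_symm_apply]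

lemma subCols_eq_submatrix {M N : ℕ} (X : Matrix (Fin M) (Fin N) ℝ) {γ γ' : Finset (Fin N)}
    (hsub : γ ⊆ γ') : ∃ ι, subCols X γ = (subCols X γ').submatrix id ι := by
  obtain ⟨ι, hι⟩ := Finset.exists_orderEmbOfFin_comp_eq hsub
  exact ⟨ι, by ext i j; simp [subCols, hι]⟩

theorem statement_1_general {M N L : ℕ} (X : Matrix (Fin M) (Fin N) ℝ) (lam : ℝ)
    (hlam0 : 0 < lam) (hA1 : DesignA1 X L lam)
    (γ γ' : Finset (Fin N)) (hγ : 1 ≤ γ.card) (hsub : γ ⊆ γ') (hγ'L : γ'.card ≤ L) :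
    onesQuad X γ' ≤ (γ'.card : ℝ) / ((M : ℝ) * lam) ∧
      onesQuad X γ ≤ onesQuad X γ' ∧
        1 / (M : ℝ) ≤ onesQuad X γ := by
  rcases Nat.eq_zero_or_pos M with rfl | hM
  · -- every Gram matrix is `0`, and `0⁻¹ = 0`, `x / 0 = 0` make all four terms vanish
    simp [onesQuad, _root_.gram, empty_mul_empty]
  have hc : 0 < (M : ℝ) * lam := by positivity
  have hγ' : 1 ≤ γ'.card := hγ.trans (Finset.card_le_card hsub)
  have hunit : ∀ σ : Finset (Fin N), 1 ≤ σ.card → σ.card ≤ L → IsUnit (gram X σ).det :=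
    fun σ h1 hL => isUnit_det_of_le_dotProduct_mulVec hc (hA1.2 σ h1 hL)
  have hγunit := hunit γ hγ ((Finset.card_le_card hsub).trans hγ'L)
  refine ⟨?_, ?_, ?_⟩
  · have h := dotProduct_inv_mulVec_le_div hc (hA1.2 γ' hγ' hγ'L) fun _ => 1
    rwa [show ((fun _ => (1 : ℝ)) ⬝ᵥ fun _ : Fin γ'.card => (1 : ℝ)) = γ'.card by
      simp [dotProduct]] at h
  · obtain ⟨ι, hι⟩ := subCols_eq_submatrix X hsub
    rw [_root_.gram, hι] at hγunit
    rw [onesQuad, _root_.gram, hι]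
    exact dotProduct_inv_mulVec_submatrix_le (hunit γ' hγ' hγ'L) ι hγunit fun _ => 1
  · have : Nonempty (Fin γ.card) := ⟨⟨0, hγ⟩⟩
    exact one_div_le_one_dotProduct_inv_mulVec_one hγunit (by exact_mod_cast hM)
      fun j => hA1.1 _

/-- eq. (S-quad-bound): under (A1), for `∅ ≠ γ ⊆ γ'` with `γ' ∈ S_L`,
`|γ'|/(Mλ̲) ≥ 𝟙ᵀ(X_{γ'}ᵀX_{γ'})⁻¹𝟙 ≥ 𝟙ᵀ(X_γᵀX_γ)⁻¹𝟙 ≥ 1/M`. -/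
theorem statement_1 {M N L : ℕ} (X : Matrix (Fin M) (Fin N) ℝ) (lam : ℝ)
    (hlam0 : 0 < lam) (hlam1 : lam ≤ 1) (hA1 : DesignA1 X L lam)
    (γ γ' : Finset (Fin N)) (hγ : 1 ≤ γ.card) (hsub : γ ⊆ γ') (hγ'L : γ'.card ≤ L) :
    onesQuad X γ' ≤ (γ'.card : ℝ) / ((M : ℝ) * lam) ∧
      onesQuad X γ ≤ onesQuad X γ' ∧
        1 / (M : ℝ) ≤ onesQuad X γ :=
  statement_1_general X lam hlam0 hA1 γ γ' hγ hsub hγ'L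
end
end

section
/- Let Z ∈ ℝ^{n×p} with ZᵀZ invertible, Q ∈ ℝ^{p×k} with k < p and Qᵀ(ZᵀZ)⁻¹Q invertible, v ∈ ℝ^k, and let R ∈ ℝ^{p×(p−k)} satisfy RᵀQ = 0 with [Q R] invertible. Suppose y = Zμ* + ε for some μ* ∈ ℝ^p with Qᵀμ* = v and some ε ∈ ℝⁿ. Then the constrained least-squares estimator μ̌ = μ̂ − (ZᵀZ)⁻¹Q[Qᵀ(ZᵀZ)⁻¹Q]⁻¹(Qᵀμ̂ − v), where μ̂ = (ZᵀZ)⁻¹Zᵀy, satisfies μ̌ = μ* + R(RᵀZᵀZR)⁻¹RᵀZᵀε. -/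
/-! With `A = ZᵀZ` and `δ = A⁻¹Zᵀε` we have `μ̂ = μ* + δ` and `Qᵀμ̂ - v = Qᵀδ`, so `μ̌ - μ*` is `δ`
minus the correction `A⁻¹Q(QᵀA⁻¹Q)⁻¹Qᵀδ`, a vector in `ker Qᵀ`. Since `[Q R]` is invertible and
`RᵀQ = 0`, `ker Qᵀ = range R`, so `μ̌ - μ* = Rb`. Applying `RᵀA`, which kills `A⁻¹Q`, gives
`(RᵀAR) b = RᵀAδ = RᵀZᵀε`, and `RᵀAR = (ZR)ᵀ(ZR)` is invertible because `ZR` is injective. -/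

open Matrix

noncomputable section

/-- The square block matrix `[Q R]` obtained by concatenating the columns of
`Q ∈ ℝ^{p×k}` and `R ∈ ℝ^{p×(p-k)}`. -/
def blockQR {p k : ℕ} (Q : Matrix (Fin p) (Fin k) ℝ) (R : Matrix (Fin p) (Fin (p - k)) ℝ) :
    Matrix (Fin p) (Fin p) ℝ :=
  Matrix.of fun i j =>
    if h : (j : ℕ) < k then Q i ⟨j, h⟩
    else R i ⟨(j : ℕ) - k, by have := j.isLt; omega⟩

open Function

namespace ConstrainedLeastSquares

theorem mulVec_injective_of_fromCols {K m ι κ : Type*} [Semiring K] [Fintype ι] [Fintype κ]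
    {Q : Matrix m ι K} {R : Matrix m κ K}
    (hQR : Injective (fromCols Q R).mulVec) : Injective R.mulVec := by
  intro b b' hb
  have h : Sum.elim (0 : ι → K) b = Sum.elim (0 : ι → K) b' :=
    hQR (by rw [fromCols_mulVec_sumElim, fromCols_mulVec_sumElim, hb])
  simpa using congrArg (· ∘ Sum.inr) h

section Field

variable {K : Type*} [Field K] {m ι κ : Type*} [Fintype m] [Fintype ι] [Fintype κ]

/-- Both sides are the projection onto `ker Qᵀ = range R` along `A⁻¹ (range Q)`. -/
theorem constraint_projection_eq [DecidableEq m] [DecidableEq ι] [DecidableEq κ]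
    {A : Matrix m m K} {Q : Matrix m ι K} {R : Matrix m κ K}
    (hA : IsUnit A.det) (hB : IsUnit (Qᵀ * A⁻¹ * Q).det) (hC : IsUnit (Rᵀ * A * R).det)
    (hRQ : Rᵀ * Q = 0) (hker : ∀ u, Qᵀ *ᵥ u = 0 → ∃ b, R *ᵥ b = u) (δ : m → K) :
    δ - (A⁻¹ * Q * (Qᵀ * A⁻¹ * Q)⁻¹) *ᵥ (Qᵀ *ᵥ δ) = (R * (Rᵀ * A * R)⁻¹ * Rᵀ) *ᵥ (A *ᵥ δ) := by
  set u := δ - (A⁻¹ * Q * (Qᵀ * A⁻¹ * Q)⁻¹) *ᵥ (Qᵀ *ᵥ δ)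
  have hQu : Qᵀ *ᵥ u = 0 := by
    simp only [u, mulVec_sub, mulVec_mulVec, ← Matrix.mul_assoc, mul_nonsing_inv _ hB,
      Matrix.one_mul, sub_self]
  obtain ⟨b, hb⟩ := hker u hQu
  have hRAu : (Rᵀ * A * R) *ᵥ b = Rᵀ *ᵥ (A *ᵥ δ) := by
    rw [← mulVec_mulVec, ← mulVec_mulVec, hb]
    simp only [u, mulVec_sub, mulVec_mulVec, ← Matrix.mul_assoc]
    rw [Matrix.mul_assoc Rᵀ A, mul_nonsing_inv _ hA, Matrix.mul_one, hRQ]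
    simp only [Matrix.zero_mul, zero_mulVec, sub_zero]
  have hb' : b = (Rᵀ * A * R)⁻¹ *ᵥ (Rᵀ *ᵥ (A *ᵥ δ)) := by
    rw [← hRAu, mulVec_mulVec, nonsing_inv_mul _ hC, one_mulVec]
  rw [← hb, hb']
  simp only [mulVec_mulVec, Matrix.mul_assoc]

end Field

section LinearOrderedField

variable {K : Type*} [Field K] [LinearOrder K] [IsStrictOrderedRing K]
  {m ι κ : Type*} [Fintype m] [Fintype ι] [Fintype κ]

theorem mulVec_injective_transpose_mul_self_iff (W : Matrix m ι K) :
    Injective (Wᵀ * W).mulVec ↔ Injective W.mulVec := by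
  rw [← coe_mulVecLin, ← coe_mulVecLin, ← LinearMap.ker_eq_bot, ← LinearMap.ker_eq_bot,
    ker_mulVecLin_transpose_mul_self]

theorem isUnit_det_transpose_mul_self_iff [DecidableEq ι] (W : Matrix m ι K) :
    IsUnit (Wᵀ * W).det ↔ Injective W.mulVec := by
  rw [← isUnit_iff_isUnit_det, ← mulVec_injective_iff_isUnit,
    mulVec_injective_transpose_mul_self_iff]

theorem exists_mulVec_eq_of_transpose_mulVec_eq_zero {Q : Matrix m ι K} {R : Matrix m κ K}
    (hQR : Surjective (fromCols Q R).mulVec) (hRQ : Rᵀ * Q = 0) {u : m → K}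
    (hu : Qᵀ *ᵥ u = 0) : ∃ b, R *ᵥ b = u := by
  obtain ⟨w, rfl⟩ := hQR u
  have hQR0 : Qᵀ * R = 0 := by
    simpa only [transpose_mul, transpose_transpose, transpose_zero] using congrArg transpose hRQ
  have hQQ : (Qᵀ * Q) *ᵥ (w ∘ Sum.inl) = 0 := by
    rwa [fromCols_mulVec, mulVec_add, mulVec_mulVec, mulVec_mulVec, hQR0, zero_mulVec,
      add_zero] at hu
  have hQ : Q *ᵥ (w ∘ Sum.inl) = 0 := (ker_mulVecLin_transpose_mul_self Q).le hQQ
  exact ⟨w ∘ Sum.inr, by rw [fromCols_mulVec, hQ, zero_add]⟩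

end LinearOrderedField

section Block

variable {p k : ℕ}

theorem blockQR_submatrix_eq_fromCols (hk : k ≤ p) (Q : Matrix (Fin p) (Fin k) ℝ)
    (R : Matrix (Fin p) (Fin (p - k)) ℝ) :
    (blockQR Q R).submatrix id (finSumFinEquiv.trans (finCongr (Nat.add_sub_of_le hk))) =
      fromCols Q R := by
  ext i (j | j) <;> simp [blockQR]

theorem mulVec_fromCols_bijective (hk : k ≤ p) {Q : Matrix (Fin p) (Fin k) ℝ}
    {R : Matrix (Fin p) (Fin (p - k)) ℝ} (hQR : IsUnit (blockQR Q R).det) :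
    Bijective (fromCols Q R).mulVec := by
  set e := finSumFinEquiv.trans (finCongr (Nat.add_sub_of_le hk))
  have hM : IsUnit (blockQR Q R) := (isUnit_iff_isUnit_det _).2 hQR
  have h : (fromCols Q R).mulVec = (blockQR Q R).mulVec ∘ (e.arrowCongr (Equiv.refl ℝ)) := by
    ext x i
    rw [← blockQR_submatrix_eq_fromCols hk, submatrix_mulVec_equiv]
    rfl
  rw [h]
  exact Bijective.comp ⟨mulVec_injective_iff_isUnit.2 hM, mulVec_surjective_iff_isUnit.2 hM⟩
    (Equiv.bijective _)

end Block

end ConstrainedLeastSquares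

open ConstrainedLeastSquares

/-- Theorem S1 (iii): if `y = Zμ* + ε` with `Qᵀμ* = v`, then the constrained
least-squares estimator satisfies `μ̌ = μ* + R(RᵀZᵀZR)⁻¹RᵀZᵀε`. -/
theorem statement_5 {n p k : ℕ} (hk : k < p)
    (Z : Matrix (Fin n) (Fin p) ℝ) (Q : Matrix (Fin p) (Fin k) ℝ)
    (R : Matrix (Fin p) (Fin (p - k)) ℝ) (v : Fin k → ℝ)
    (hZ : IsUnit (Zᵀ * Z).det)
    (hQ : IsUnit (Qᵀ * (Zᵀ * Z)⁻¹ * Q).det)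
    (hRQ : Rᵀ * Q = 0) (hQR : IsUnit (blockQR Q R).det)
    (μstar : Fin p → ℝ) (ε : Fin n → ℝ) (hμstar : Qᵀ *ᵥ μstar = v)
    (y : Fin n → ℝ) (hy : y = Z *ᵥ μstar + ε) :
    let μhat := (Zᵀ * Z)⁻¹ *ᵥ (Zᵀ *ᵥ y)
    let μcheck := μhat - ((Zᵀ * Z)⁻¹ * Q * (Qᵀ * (Zᵀ * Z)⁻¹ * Q)⁻¹) *ᵥ (Qᵀ *ᵥ μhat - v)
    μcheck = μstar + (R * (Rᵀ * (Zᵀ * Z) * R)⁻¹ * Rᵀ * Zᵀ) *ᵥ ε := by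
  intro μhat μcheck
  have hQRbij := mulVec_fromCols_bijective hk.le hQR
  have hZR : Injective (Z * R).mulVec := by
    have hcomp : (Z * R).mulVec = Z.mulVec ∘ R.mulVec := funext fun x => (mulVec_mulVec x Z R).symm
    rw [hcomp]
    exact ((isUnit_det_transpose_mul_self_iff Z).1 hZ).comp (mulVec_injective_of_fromCols hQRbij.1)
  have hC : IsUnit (Rᵀ * (Zᵀ * Z) * R).det := by
    simpa only [transpose_mul, Matrix.mul_assoc] using (isUnit_det_transpose_mul_self_iff _).2 hZR
  have hprojection := constraint_projection_eq hZ hQ hC hRQ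
    (fun _ hu => exists_mulVec_eq_of_transpose_mulVec_eq_zero hQRbij.2 hRQ hu)
    ((Zᵀ * Z)⁻¹ *ᵥ (Zᵀ *ᵥ ε))
  have hμhat : μhat = μstar + (Zᵀ * Z)⁻¹ *ᵥ (Zᵀ *ᵥ ε) := by
    show (Zᵀ * Z)⁻¹ *ᵥ (Zᵀ *ᵥ y) = _
    rw [hy, mulVec_add, mulVec_add, mulVec_mulVec μstar Zᵀ Z, mulVec_mulVec,
      nonsing_inv_mul _ hZ, one_mulVec]
  show μhat - _ *ᵥ (Qᵀ *ᵥ μhat - v) = _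
  rw [hμhat, mulVec_add, hμstar, add_sub_cancel_left, add_sub_assoc, hprojection,
    mulVec_mulVec _ (Zᵀ * Z), mul_nonsing_inv _ hZ, one_mulVec, mulVec_mulVec]
end
end

section
/- Let Q ∈ ℝ^{p×k} and R ∈ ℝ^{p×(p−k)} satisfy RᵀQ = 0 and [Q R] invertible, and let A ∈ ℝ^{p×p} be symmetric positive definite. Then Q(QᵀA⁻¹Q)⁻¹Qᵀ = A − AR(RᵀAR)⁻¹RᵀA. -/
/-!
Write `G = QᵀA⁻¹Q` and `H = RᵀAR`; both are positive definite because `[Q R]` invertible forces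
`Q` and `R` to have trivial kernels. Using `RᵀQ = 0`, the difference
`M = QG⁻¹Qᵀ + ARH⁻¹RᵀA - A` satisfies `M(A⁻¹Q) = 0` and `MR = 0`. The columns of `A⁻¹Q` and `R`
are independent (apply `Qᵀ` to a relation between them: it kills `R` and turns `A⁻¹Q` into `G`),
and there are `p` of them, so `M = 0`.
-/

open Matrix

noncomputable section

def finSumFinSubEquiv {p k : ℕ} (hk : k ≤ p) : Fin k ⊕ Fin (p - k) ≃ Fin p :=
  finSumFinEquiv.trans (finCongr (Nat.add_sub_cancel' hk))

lemma blockQR_eq_submatrix_fromCols {p k : ℕ} (hk : k ≤ p) (Q : Matrix (Fin p) (Fin k) ℝ)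
    (R : Matrix (Fin p) (Fin (p - k)) ℝ) :
    blockQR Q R = (fromCols Q R).submatrix id (finSumFinSubEquiv hk).symm := by
  ext i j
  obtain ⟨s, rfl⟩ := (finSumFinSubEquiv hk).surjective j
  rcases s with j | j <;> simp [blockQR, finSumFinSubEquiv]

namespace Matrix

variable {α m n₁ n₂ : Type*} [Fintype n₁] [Fintype n₂]

lemma mulVec_injective_left_of_fromCols [Semiring α] {X : Matrix m n₁ α} {Y : Matrix m n₂ α}
    (h : Function.Injective (fromCols X Y).mulVec) : Function.Injective X.mulVec := fun v w hvw =>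
  (Sum.elim_eq_iff.mp (h (a₁ := Sum.elim v 0) (a₂ := Sum.elim w 0)
    (by simp only [fromCols_mulVec_sumElim, hvw]))).1

lemma mulVec_injective_right_of_fromCols [Semiring α] {X : Matrix m n₁ α} {Y : Matrix m n₂ α}
    (h : Function.Injective (fromCols X Y).mulVec) : Function.Injective Y.mulVec := fun v w hvw =>
  (Sum.elim_eq_iff.mp (h (a₁ := Sum.elim 0 v) (a₂ := Sum.elim 0 w)
    (by simp only [fromCols_mulVec_sumElim, hvw]))).2

lemma mulVec_submatrix_id_injective_iff [Semiring α] {n o : Type*} [Fintype n] [Fintype o]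
    (N : Matrix m n α) (e : o ≃ n) :
    Function.Injective (N.submatrix id e).mulVec ↔ Function.Injective N.mulVec := by
  have : (N.submatrix id e).mulVec = N.mulVec ∘ fun v => v ∘ e.symm :=
    funext fun v => submatrix_mulVec_equiv N v id e
  rw [this, Function.Injective.of_comp_iff']
  exact (Equiv.arrowCongr e (Equiv.refl α)).bijective

lemma fromCols_mulVec_injective [Ring α] [Fintype m] {l : Type*} {X : Matrix m n₁ α}
    {Y : Matrix m n₂ α} {P : Matrix l m α} (hPX : Function.Injective (P * X).mulVec)
    (hPY : P * Y = 0) (hY : Function.Injective Y.mulVec) :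
    Function.Injective (fromCols X Y).mulVec := by
  intro v w hvw
  rw [fromCols_mulVec, fromCols_mulVec] at hvw
  have hl : v ∘ Sum.inl = w ∘ Sum.inl := hPX <| by
    simpa only [mulVec_add, mulVec_mulVec, hPY, zero_mulVec, add_zero] using congrArg (P *ᵥ ·) hvw
  rw [hl, add_right_inj] at hvw
  have hr := hY hvw
  funext s
  rcases s with s | s
  exacts [congrFun hl s, congrFun hr s]

lemma eq_zero_of_mul_fromCols_eq_zero [Field α] [Fintype m] [DecidableEq m] {l : Type*}
    (e : m ≃ n₁ ⊕ n₂) {X : Matrix m n₁ α} {Y : Matrix m n₂ α}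
    (h : Function.Injective (fromCols X Y).mulVec) {M : Matrix l m α}
    (hX : M * X = 0) (hY : M * Y = 0) : M = 0 := by
  set C := (fromCols X Y).submatrix id e
  have hC : IsUnit C.det := by
    rwa [← isUnit_iff_isUnit_det, ← mulVec_injective_iff_isUnit, mulVec_submatrix_id_injective_iff]
  have hMC : M * C = 0 := by
    have := submatrix_mul M (fromCols X Y) id id e Function.bijective_id
    rw [mul_fromCols, hX, hY, fromCols_zero, submatrix_zero] at this
    exact this.symm
  calc M = M * C * C⁻¹ := (mul_nonsing_inv_cancel_right C M hC).symm
    _ = 0 := by rw [hMC, Matrix.zero_mul]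

lemma PosDef.transpose_mul_mul_same {m n : Type*} [Fintype m] [Fintype n] {A : Matrix m m ℝ}
    (hA : A.PosDef) {B : Matrix m n ℝ} (hB : Function.Injective B.mulVec) :
    (Bᵀ * A * B).PosDef := by
  simpa only [conjTranspose_eq_transpose_of_trivial] using hA.conjTranspose_mul_mul_same hB

theorem gram_inv_add_gram_inv_eq_self {m n₁ n₂ : Type*} [Fintype m] [DecidableEq m] [Fintype n₁]
    [DecidableEq n₁] [Fintype n₂] [DecidableEq n₂] (e : m ≃ n₁ ⊕ n₂) {Q : Matrix m n₁ ℝ}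
    {R : Matrix m n₂ ℝ} (hQR : Function.Injective (fromCols Q R).mulVec) (hRQ : Rᵀ * Q = 0)
    {A : Matrix m m ℝ} (hA : A.PosDef) :
    Q * (Qᵀ * A⁻¹ * Q)⁻¹ * Qᵀ + A * R * (Rᵀ * A * R)⁻¹ * Rᵀ * A = A := by
  have hQRt : Qᵀ * R = 0 := by simpa using congrArg transpose hRQ
  have hAu : IsUnit A.det := (isUnit_iff_isUnit_det A).mp hA.isUnit
  have hG := hA.inv.transpose_mul_mul_same (mulVec_injective_left_of_fromCols hQR)
  have hH := hA.transpose_mul_mul_same (mulVec_injective_right_of_fromCols hQR)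
  set G := Qᵀ * A⁻¹ * Q with hG_def
  set H := Rᵀ * A * R with hH_def
  have hGu : IsUnit G.det := (isUnit_iff_isUnit_det G).mp hG.isUnit
  have hHu : IsUnit H.det := (isUnit_iff_isUnit_det H).mp hH.isUnit
  have hspan : Function.Injective (fromCols (A⁻¹ * Q) R).mulVec := by
    refine fromCols_mulVec_injective (P := Qᵀ) ?_ hQRt (mulVec_injective_right_of_fromCols hQR)
    rw [← Matrix.mul_assoc, mulVec_injective_iff_isUnit]
    exact hG.isUnit
  rw [← sub_eq_zero]
  refine eq_zero_of_mul_fromCols_eq_zero e hspan ?_ ?_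
  · calc (Q * G⁻¹ * Qᵀ + A * R * H⁻¹ * Rᵀ * A - A) * (A⁻¹ * Q)
        = Q * (G⁻¹ * G) + A * R * H⁻¹ * (Rᵀ * (A * A⁻¹) * Q) - A * A⁻¹ * Q := by
          simp only [hG_def, Matrix.sub_mul, Matrix.add_mul, Matrix.mul_assoc]
      _ = 0 := by
        rw [nonsing_inv_mul G hGu, mul_nonsing_inv A hAu, Matrix.mul_one, Matrix.mul_one, hRQ]
        simp
  · calc (Q * G⁻¹ * Qᵀ + A * R * H⁻¹ * Rᵀ * A - A) * R
        = Q * G⁻¹ * (Qᵀ * R) + A * R * (H⁻¹ * H) - A * R := by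
          simp only [hH_def, Matrix.sub_mul, Matrix.add_mul, Matrix.mul_assoc]
      _ = 0 := by
        rw [nonsing_inv_mul H hHu, hQRt]
        simp

end Matrix

/-- Lemma S2, eq. (S-716eq): if `RᵀQ = 0`, `[Q R]` is invertible and `A` is
symmetric positive definite, then `Q(QᵀA⁻¹Q)⁻¹Qᵀ = A − AR(RᵀAR)⁻¹RᵀA`. -/
theorem statement_6 {p k : ℕ} (hk : k < p)
    (Q : Matrix (Fin p) (Fin k) ℝ) (R : Matrix (Fin p) (Fin (p - k)) ℝ)
    (hRQ : Rᵀ * Q = 0) (hQR : IsUnit (blockQR Q R).det)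
    (A : Matrix (Fin p) (Fin p) ℝ) (hA : A.PosDef) :
    Q * (Qᵀ * A⁻¹ * Q)⁻¹ * Qᵀ = A - A * R * (Rᵀ * A * R)⁻¹ * Rᵀ * A := by
  set e := finSumFinSubEquiv hk.le
  have hinj : Function.Injective (fromCols Q R).mulVec := by
    rwa [← mulVec_submatrix_id_injective_iff _ e.symm, ← blockQR_eq_submatrix_fromCols,
      mulVec_injective_iff_isUnit, isUnit_iff_isUnit_det]
  rw [eq_sub_iff_add_eq]
  exact gram_inv_add_gram_inv_eq_self e.symm hinj hRQ hA
end
end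

section
/- Let B ∈ ℝ^{M×ℓ} (ℓ ≥ 2) have BᵀB invertible, and let D ∈ ℝ^{ℓ×(ℓ−1)} be the matrix whose first ℓ−1 rows form the identity I_{ℓ−1} and whose last row is (−1,…,−1). Then det(DᵀBᵀBD) = det(BᵀB) · 𝟙ᵀ(BᵀB)⁻¹𝟙, where 𝟙 ∈ ℝ^ℓ is the all-ones vector. -/
open Matrix

noncomputable section

/-- The matrix `D ∈ ℝ^{ℓ×(ℓ-1)}` whose first `ℓ-1` rows form the identity and whose last row
is `(-1, …, -1)`. -/
def Dmat (ℓ : ℕ) : Matrix (Fin ℓ) (Fin (ℓ - 1)) ℝ :=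
  Matrix.of fun i j => if (i : ℕ) = ℓ - 1 then -1 else if (i : ℕ) = (j : ℕ) then 1 else 0

/-!
Complete `D` by the last standard basis column to a unimodular lower-triangular matrix `E`,
whose inverse has all-ones last row. Then `DᵀAD` is the leading principal minor of `EᵀAE`
of order `ℓ - 1`, so its determinant is the cofactor
`adj(EᵀAE)_{ℓℓ} = (E⁻¹ adj(A) E⁻ᵀ)_{ℓℓ} = 𝟙ᵀ adj(A) 𝟙`, and `adj(A) = det(A) A⁻¹`.
-/

theorem Matrix.det_submatrix_castSucc_eq_adjugate_last {R : Type*} [CommRing R] {n : ℕ}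
    (M : Matrix (Fin (n + 1)) (Fin (n + 1)) R) :
    (M.submatrix Fin.castSucc Fin.castSucc).det = adjugate M (Fin.last n) (Fin.last n) := by
  rw [adjugate_fin_succ_eq_det_submatrix, Fin.succAbove_last, Fin.val_last,
    (Even.add_self n).neg_one_pow, one_mul]

namespace Dmat

def completion (n : ℕ) : Matrix (Fin (n + 1)) (Fin (n + 1)) ℝ :=
  of fun i j =>
    if i = Fin.last n then (if j = Fin.last n then 1 else -1) else if i = j then 1 else 0

def completionInv (n : ℕ) : Matrix (Fin (n + 1)) (Fin (n + 1)) ℝ :=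
  of fun i j => if i = Fin.last n then 1 else if i = j then 1 else 0

theorem eq_completion_submatrix (n : ℕ) :
    Dmat (n + 1) = (completion n).submatrix id Fin.castSucc := by
  ext i j
  have : (j : ℕ) < n := j.isLt
  simp only [Dmat, completion, submatrix_apply, of_apply, id, Fin.ext_iff, Fin.val_last,
    Fin.val_castSucc]
  split_ifs <;> first | rfl | omega

theorem det_completion (n : ℕ) : (completion n).det = 1 := by
  rw [det_of_isLowerTriangular]
  · simp [completion]
  · intro i j hji
    have hij : i < j := OrderDual.toDual_lt_toDual.mp hji
    simp [completion, hij.ne, (hij.trans_le (Fin.le_last j)).ne]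

theorem completionInv_mul_completion (n : ℕ) : completionInv n * completion n = 1 := by
  ext i j
  induction i using Fin.lastCases <;> induction j using Fin.lastCases <;>
    simp [completionInv, completion, mul_apply, Fin.sum_univ_castSucc, one_apply,
      (Fin.castSucc_ne_last _).symm]

theorem adjugate_completion (n : ℕ) : adjugate (completion n) = completionInv n := by
  have h := mul_eq_one_comm.mp (completionInv_mul_completion n)
  calc adjugate (completion n)
      = adjugate (completion n) * completion n * completionInv n := by
        rw [Matrix.mul_assoc, h, Matrix.mul_one]
    _ = completionInv n := by
        rw [adjugate_mul, det_completion, one_smul, Matrix.one_mul]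

theorem transpose_mul_mul_eq_submatrix (n : ℕ) (A : Matrix (Fin (n + 1)) (Fin (n + 1)) ℝ) :
    (Dmat (n + 1))ᵀ * A * Dmat (n + 1) =
      ((completion n)ᵀ * A * completion n).submatrix Fin.castSucc Fin.castSucc := by
  rw [submatrix_mul _ _ _ id _ Function.bijective_id,
    submatrix_mul _ _ _ id _ Function.bijective_id, ← transpose_submatrix,
    ← eq_completion_submatrix, submatrix_id_id]

theorem det_transpose_mul_mul_eq_dotProduct_adjugate (n : ℕ)
    (A : Matrix (Fin (n + 1)) (Fin (n + 1)) ℝ) :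
    ((Dmat (n + 1))ᵀ * A * Dmat (n + 1)).det =
      (fun _ => (1 : ℝ)) ⬝ᵥ (adjugate A *ᵥ fun _ => (1 : ℝ)) := by
  rw [transpose_mul_mul_eq_submatrix, det_submatrix_castSucc_eq_adjugate_last,
    adjugate_mul_distrib, adjugate_mul_distrib, ← adjugate_transpose, adjugate_completion]
  simp [mul_apply, dotProduct, mulVec, completionInv, Finset.mul_sum]

end Dmat

/-- eq. (S-det-likelihood): for `B ∈ ℝ^{M×ℓ}` with `BᵀB` invertible,
`det(DᵀBᵀBD) = det(BᵀB) · 𝟙ᵀ(BᵀB)⁻¹𝟙`. -/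
theorem statement_8 {M ℓ : ℕ} (hℓ : 2 ≤ ℓ) (B : Matrix (Fin M) (Fin ℓ) ℝ)
    (hB : IsUnit (Bᵀ * B).det) :
    ((Dmat ℓ)ᵀ * (Bᵀ * B) * Dmat ℓ).det =
      (Bᵀ * B).det * ((fun _ => (1 : ℝ)) ⬝ᵥ ((Bᵀ * B)⁻¹ *ᵥ fun _ => (1 : ℝ))) := by
  obtain ⟨n, rfl⟩ : ∃ n, ℓ = n + 1 := ⟨ℓ - 1, by omega⟩
  rw [Dmat.det_transpose_mul_mul_eq_dotProduct_adjugate, ← smul_eq_mul, ← dotProduct_smul,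
    det_smul_inv_mulVec_eq_cramer _ _ hB, cramer_eq_adjugate_mulVec]
end
end

section
/- Let X_γ ∈ ℝ^{M×ℓ} (ℓ ≥ 1) with X_γᵀX_γ invertible, y ∈ ℝ^M, and φ > 0. Define μ̂_γ = (X_γᵀX_γ)⁻¹X_γᵀy, μ̌_γ = μ̂_γ + ((1 − 𝟙ᵀμ̂_γ)/(𝟙ᵀ(X_γᵀX_γ)⁻¹𝟙))(X_γᵀX_γ)⁻¹𝟙, and b_γ = (1 − 𝟙ᵀμ̂_γ)²/(𝟙ᵀ(X_γᵀX_γ)⁻¹𝟙). Parameterizing points of the simplex Δ^{ℓ−1} by their first ℓ−1 coordinates ũ ∈ Δ̃^{ℓ−1} (so u = (ũ, 1 − Σᵢũᵢ)), one has the identity ∫_{Δ̃^{ℓ−1}} exp(−(φ/2)‖y − X_γ u(ũ)‖₂²) dũ = (2π/φ)^{(ℓ−1)/2} det(DᵀX_γᵀX_γD)^{−1/2} exp(−(φ/2)(‖y − X_γ μ̂_γ‖₂² + b_γ)) · ℙ(Ũ ∈ Δ̃^{ℓ−1}), where Ũ is a Gaussian random vector in ℝ^{ℓ−1} with mean Π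 μ̌_γ and covariance matrix (φ DᵀX_γᵀX_γD)⁻¹. -/
/-!
Since `𝟙ᵀμ̌ = 1`, the parameterization is affine with linear part `D`:
`u(ũ) = μ̌ + D (ũ - Πμ̌)`. The residual `y - X u(ũ)` then splits into three orthogonal pieces:
`y - Xμ̂`, orthogonal to the column space of `X` by the normal equations; `X(μ̂ - μ̌)`, a multiple
of `X G⁻¹𝟙` where `G = XᵀX`; and `X D (ũ - Πμ̌)`, orthogonal to the previous one because `𝟙ᵀD = 0`. Their squared
norms are `‖y - Xμ̂‖²`, `b` and the quadratic form of `A = DᵀGD` at `ũ - Πμ̌`, so the integrand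
factors as `exp(-(φ/2)(‖y - Xμ̂‖² + b))` times an unnormalized Gaussian density. As `D` is
injective, `A` is positive definite, so `det A > 0` and the normalizing constants cancel.
-/

open Matrix MeasureTheory BigOperators

noncomputable section

/-- The lower-dimensional simplex `Δ̃^k = {ũ ∈ ℝ^k : ũᵢ ≥ 0, Σᵢ ũᵢ ≤ 1}`. -/
def simplexTilde (k : ℕ) : Set (Fin k → ℝ) :=
  {u | (∀ i, 0 ≤ u i) ∧ ∑ i, u i ≤ 1}

/-- The parameterization of `Δ^{ℓ-1}` by its first `ℓ-1` coordinates: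
`ũ ∈ ℝ^{ℓ-1} ↦ u = (ũ, 1 − Σᵢ ũᵢ) ∈ ℝ^ℓ`. -/
def liftSimplex (ℓ : ℕ) (u : Fin (ℓ - 1) → ℝ) : Fin ℓ → ℝ :=
  fun i => if h : (i : ℕ) < ℓ - 1 then u ⟨i, h⟩ else 1 - ∑ j, u j

section DotProduct

variable {m n R : Type*} [Fintype m] [Fintype n] [CommRing R]

lemma dotProduct_self_add_of_dotProduct_eq_zero {a b : m → R} (h : a ⬝ᵥ b = 0) :
    (a + b) ⬝ᵥ (a + b) = a ⬝ᵥ a + b ⬝ᵥ b := by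
  rw [add_dotProduct, dotProduct_add, dotProduct_add, dotProduct_comm b a, h]
  ring

lemma dotProduct_self_sub_of_dotProduct_eq_zero {a b : m → R} (h : a ⬝ᵥ b = 0) :
    (a - b) ⬝ᵥ (a - b) = a ⬝ᵥ a + b ⬝ᵥ b := by
  rw [sub_dotProduct, dotProduct_sub, dotProduct_sub, dotProduct_comm b a, h]
  ring

lemma mulVec_dotProduct_mulVec (X : Matrix m n R) (a b : n → R) :
    (X *ᵥ a) ⬝ᵥ (X *ᵥ b) = a ⬝ᵥ ((Xᵀ * X) *ᵥ b) := by
  rw [← mulVec_mulVec, dotProduct_mulVec a, vecMul_transpose]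

lemma sub_mulVec_dotProduct_mulVec_eq_zero {X : Matrix m n R} {y : m → R} {μ : n → R}
    (hμ : (Xᵀ * X) *ᵥ μ = Xᵀ *ᵥ y) (z : n → R) :
    (y - X *ᵥ μ) ⬝ᵥ (X *ᵥ z) = 0 := by
  rw [dotProduct_mulVec, ← mulVec_transpose, mulVec_sub, mulVec_mulVec, hμ, sub_self,
    zero_dotProduct]

end DotProduct

lemma posDef_transpose_mul_self_of_isUnit_det {m n : Type*} [Fintype m] [Fintype n]
    [DecidableEq n] {X : Matrix m n ℝ} (hX : IsUnit (Xᵀ * X).det) : (Xᵀ * X).PosDef := by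
  have hinj : Function.Injective X.mulVec := by
    refine Function.Injective.of_comp (f := Xᵀ.mulVec) ?_
    simpa only [Function.comp_def, mulVec_mulVec] using
      mulVec_injective_iff_isUnit.mpr ((isUnit_iff_isUnit_det _).mpr hX)
  simpa only [conjTranspose_eq_transpose_of_trivial] using PosDef.conjTranspose_mul_self X hinj

lemma dmat_mulVec_apply {ℓ : ℕ} (w : Fin (ℓ - 1) → ℝ) (i : Fin ℓ) :
    (Dmat ℓ *ᵥ w) i = if h : (i : ℕ) < ℓ - 1 then w ⟨i, h⟩ else -∑ j, w j := by
  by_cases h : (i : ℕ) < ℓ - 1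
  · have hi : ∀ j : Fin (ℓ - 1), ((i : ℕ) = j) = (⟨i, h⟩ = j) := fun j => by simp [Fin.ext_iff]
    simp [Dmat, mulVec, dotProduct, h, h.ne, hi]
  · simp [Dmat, mulVec, dotProduct, show (i : ℕ) = ℓ - 1 by omega]

lemma ones_dotProduct_dmat_mulVec (ℓ : ℕ) (w : Fin (ℓ - 1) → ℝ) :
    (fun _ => 1) ⬝ᵥ (Dmat ℓ *ᵥ w) = 0 := by
  cases ℓ with
  | zero => simp
  | succ k =>
    simp only [dotProduct, one_mul, Fin.sum_univ_castSucc, dmat_mulVec_apply]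
    simp

lemma dmat_mulVec_injective (ℓ : ℕ) : Function.Injective (Dmat ℓ).mulVec := by
  intro v w hvw
  funext j
  simpa [dmat_mulVec_apply] using congrFun hvw (Fin.castLE (Nat.sub_le ℓ 1) j)

lemma liftSimplex_add (ℓ : ℕ) (u w : Fin (ℓ - 1) → ℝ) :
    liftSimplex ℓ (u + w) = liftSimplex ℓ u + Dmat ℓ *ᵥ w := by
  funext i
  simp only [liftSimplex, Pi.add_apply, dmat_mulVec_apply]
  split_ifs
  · rfl
  · rw [Finset.sum_add_distrib]; ring

lemma liftSimplex_castLE {ℓ : ℕ} {v : Fin ℓ → ℝ} (hv : ∑ i, v i = 1) :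
    liftSimplex ℓ (fun i => v (Fin.castLE (Nat.sub_le ℓ 1) i)) = v := by
  cases ℓ with
  | zero => simp at hv
  | succ k =>
    funext i
    have hsum : ∑ j : Fin (k + 1 - 1), v (Fin.castLE (Nat.sub_le _ 1) j) =
        ∑ j : Fin k, v j.castSucc := rfl
    rw [Fin.sum_univ_castSucc] at hv
    simp only [liftSimplex]
    split_ifs with h
    · rfl
    · obtain rfl : i = Fin.last k := Fin.ext (by
        simp only [add_tsub_cancel_right, not_lt, Fin.val_last] at h ⊢; omega)
      simp only [hsum]
      linarith

lemma sub_mulVec_liftSimplex_dotProduct_self {ι : Type*} [Fintype ι] {ℓ : ℕ}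
    (X : Matrix ι (Fin ℓ) ℝ) (y : ι → ℝ) {μhat p : Fin ℓ → ℝ} (c : ℝ) (hμhat : (Xᵀ * X) *ᵥ μhat = Xᵀ *ᵥ y)
    (hp : (Xᵀ * X) *ᵥ p = fun _ => 1) (hsum : ∑ i, (μhat + c • p) i = 1)
    (u : Fin (ℓ - 1) → ℝ) :
    let m : Fin (ℓ - 1) → ℝ := fun i => (μhat + c • p) (Fin.castLE (Nat.sub_le ℓ 1) i)
    (y - X *ᵥ liftSimplex ℓ u) ⬝ᵥ (y - X *ᵥ liftSimplex ℓ u) =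
      (y - X *ᵥ μhat) ⬝ᵥ (y - X *ᵥ μhat) + c ^ 2 * ((fun _ => 1) ⬝ᵥ p) +
        (u - m) ⬝ᵥ (((Dmat ℓ)ᵀ * (Xᵀ * X) * Dmat ℓ) *ᵥ (u - m)) := by
  intro m
  set w := u - m
  have hlift : liftSimplex ℓ u = μhat + (c • p + Dmat ℓ *ᵥ w) := by
    rw [← add_assoc, ← liftSimplex_castLE hsum, ← liftSimplex_add, add_sub_cancel]
  have horth : (X *ᵥ (c • p)) ⬝ᵥ (X *ᵥ (Dmat ℓ *ᵥ w)) = 0 := by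
    rw [dotProduct_comm, mulVec_dotProduct_mulVec, mulVec_smul, hp, dotProduct_smul,
      dotProduct_comm, ones_dotProduct_dmat_mulVec, smul_zero]
  rw [hlift, mulVec_add, ← sub_sub,
    dotProduct_self_sub_of_dotProduct_eq_zero (sub_mulVec_dotProduct_mulVec_eq_zero hμhat _),
    mulVec_add, dotProduct_self_add_of_dotProduct_eq_zero horth, mulVec_dotProduct_mulVec,
    mulVec_smul, hp, mulVec_mulVec, mulVec_dotProduct_mulVec]
  simp only [smul_dotProduct, dotProduct_smul, smul_eq_mul, transpose_mul, Matrix.mul_assoc]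
  rw [dotProduct_comm p]
  ring

/-- `ℙ(Ũ ∈ Δ̃^{ℓ-1})` for `Ũ ~ N(Πμ̌_γ, (φA)⁻¹)` is written as the integral of the Gaussian density
over `Δ̃^{ℓ-1}`. -/
theorem statement_9 {M ℓ : ℕ} (hℓ : 1 ≤ ℓ) (Xg : Matrix (Fin M) (Fin ℓ) ℝ)
    (hX : IsUnit (Xgᵀ * Xg).det) (y : Fin M → ℝ) (φ : ℝ) (hφ : 0 < φ) :
    let G := Xgᵀ * Xg
    let μhat := G⁻¹ *ᵥ (Xgᵀ *ᵥ y)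
    let q := (fun _ => (1 : ℝ)) ⬝ᵥ (G⁻¹ *ᵥ fun _ => (1 : ℝ))
    let μcheck := μhat + ((1 - (fun _ => (1 : ℝ)) ⬝ᵥ μhat) / q) • (G⁻¹ *ᵥ fun _ => (1 : ℝ))
    let b := (1 - (fun _ => (1 : ℝ)) ⬝ᵥ μhat) ^ 2 / q
    let A := (Dmat ℓ)ᵀ * G * Dmat ℓ
    let m : Fin (ℓ - 1) → ℝ := fun i => μcheck (Fin.castLE (Nat.sub_le ℓ 1) i)
    (∫ u in simplexTilde (ℓ - 1),
        Real.exp (-(φ / 2) *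
          ((y - Xg *ᵥ liftSimplex ℓ u) ⬝ᵥ (y - Xg *ᵥ liftSimplex ℓ u)))) =
      (2 * Real.pi / φ) ^ (((ℓ - 1 : ℕ) : ℝ) / 2) * (Real.sqrt A.det)⁻¹ *
        Real.exp (-(φ / 2) * ((y - Xg *ᵥ μhat) ⬝ᵥ (y - Xg *ᵥ μhat) + b)) *
        ∫ u in simplexTilde (ℓ - 1),
          (φ / (2 * Real.pi)) ^ (((ℓ - 1 : ℕ) : ℝ) / 2) * Real.sqrt A.det *
            Real.exp (-(φ / 2) * ((u - m) ⬝ᵥ (A *ᵥ (u - m)))) := by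
  intro G μhat q μcheck b A m
  have hGG : G * G⁻¹ = 1 := mul_nonsing_inv G hX
  have hG : G.PosDef := posDef_transpose_mul_self_of_isUnit_det hX
  have hA : A.PosDef := by
    simpa only [conjTranspose_eq_transpose_of_trivial] using
      hG.conjTranspose_mul_mul_same (dmat_mulVec_injective ℓ)
  have hq : 0 < q := by
    have hone : (fun _ => (1 : ℝ)) ≠ 0 := fun h => by simpa using congrFun h (⟨0, hℓ⟩ : Fin ℓ)
    simpa only [star_trivial] using hG.inv.dotProduct_mulVec_pos hone
  have hμhat : G *ᵥ μhat = Xgᵀ *ᵥ y := by rw [mulVec_mulVec, hGG, one_mulVec]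
  have hp : G *ᵥ (G⁻¹ *ᵥ fun _ => 1) = fun _ => 1 := by simp only [mulVec_mulVec, hGG, one_mulVec]
  have hsum : ∑ i, μcheck i = 1 := by
    have hones : ∑ i, μcheck i = (fun _ => 1) ⬝ᵥ μcheck := by simp [dotProduct]
    rw [hones, dotProduct_add, dotProduct_smul, smul_eq_mul]
    field_simp
    ring
  have hb : b = ((1 - (fun _ => (1 : ℝ)) ⬝ᵥ μhat) / q) ^ 2 * q := by
    simp only [b]
    field_simp
  have hexp : ∀ u, Real.exp (-(φ / 2) *
      ((y - Xg *ᵥ liftSimplex ℓ u) ⬝ᵥ (y - Xg *ᵥ liftSimplex ℓ u))) =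
      Real.exp (-(φ / 2) * ((y - Xg *ᵥ μhat) ⬝ᵥ (y - Xg *ᵥ μhat) + b)) *
        Real.exp (-(φ / 2) * ((u - m) ⬝ᵥ (A *ᵥ (u - m)))) := fun u => by
    rw [sub_mulVec_liftSimplex_dotProduct_self Xg y _ hμhat hp hsum u, hb, ← Real.exp_add,
      ← mul_add]
  simp only [hexp, integral_const_mul]
  have hdet : Real.sqrt A.det ≠ 0 := (Real.sqrt_pos.mpr hA.det_pos).ne'
  rw [← inv_div (2 * Real.pi) φ, Real.inv_rpow (by positivity)]
  field_simp
end
end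

section
/- Let X_{γ*} ∈ ℝ^{M×ℓ*} with X_{γ*}ᵀX_{γ*} invertible, and suppose y = X_{γ*}μ* + ε where μ* ∈ ℝ^{ℓ*} satisfies 𝟙ᵀμ* = 1. Then b_{γ*} := (1 − 𝟙ᵀμ̂_{γ*})²/(𝟙ᵀ(X_{γ*}ᵀX_{γ*})⁻¹𝟙) satisfies b_{γ*} ≤ εᵀH_{γ*}ε, where μ̂_{γ*} = (X_{γ*}ᵀX_{γ*})⁻¹X_{γ*}ᵀy and H_{γ*} = X_{γ*}(X_{γ*}ᵀX_{γ*})⁻¹X_{γ*}ᵀ. In particular, if εᵀH_{γ*}ε ≤ σ²ℓ* log N, then b_{γ*} ≤ σ²ℓ* log N. -/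
open Matrix

noncomputable section

/-! Write `A = XᵀX`, `w = X A⁻¹ u` and `H = X A⁻¹ Xᵀ`. Substituting `y = Xμ* + ε` and `uᵀμ* = 1`
gives `1 - uᵀμ̂ = -wᵀε` and `uᵀA⁻¹u = ‖w‖²`, so `b = (wᵀε)² / ‖w‖²` is the squared length of the
projection of `ε` onto the line spanned by `w`. Since `w` lies in the column space of `X`,
`wᵀε = wᵀHε`, and Cauchy–Schwarz bounds `b` by `‖Hε‖² = εᵀHε`. -/

lemma dotProduct_self_nonneg_real {n : Type*} [Fintype n] (v : n → ℝ) : 0 ≤ v ⬝ᵥ v := by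
  simpa using dotProduct_star_self_nonneg v

lemma sq_dotProduct_div_le {n : Type*} [Fintype n] (w z : n → ℝ) :
    (w ⬝ᵥ z) ^ 2 / (w ⬝ᵥ w) ≤ z ⬝ᵥ z := by
  refine div_le_of_le_mul₀ (dotProduct_self_nonneg_real w) (dotProduct_self_nonneg_real z) ?_
  simpa [dotProduct, sq, mul_comm] using Finset.sum_mul_sq_le_sq_mul_sq Finset.univ w z

lemma dotProduct_mulVec_self_of_isIdempotentElem {n : Type*} [Fintype n] {P : Matrix n n ℝ}
    (hP : Pᵀ = P) (hPP : IsIdempotentElem P) (ε : n → ℝ) :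
    ε ⬝ᵥ (P *ᵥ ε) = (P *ᵥ ε) ⬝ᵥ (P *ᵥ ε) := by
  conv_lhs => rw [← hPP.eq, ← mulVec_mulVec, dotProduct_mulVec, ← mulVec_transpose, hP]

section LeastSquares

variable {m n : Type*} [Fintype m] [Fintype n] [DecidableEq n]

def hatMatrix (X : Matrix m n ℝ) : Matrix m m ℝ := X * (Xᵀ * X)⁻¹ * Xᵀ

variable (X : Matrix m n ℝ)

lemma transpose_gram_inv : (Xᵀ * X)⁻¹ᵀ = (Xᵀ * X)⁻¹ := by
  rw [transpose_nonsing_inv, transpose_mul, transpose_transpose]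

lemma transpose_hatMatrix : (hatMatrix X)ᵀ = hatMatrix X := by
  rw [hatMatrix, transpose_mul, transpose_mul, transpose_transpose, transpose_gram_inv,
    Matrix.mul_assoc]

variable {X} (hX : IsUnit (Xᵀ * X).det)
include hX

lemma hatMatrix_mul_self : hatMatrix X * X = X := by
  rw [hatMatrix, Matrix.mul_assoc _ Xᵀ X, Matrix.mul_assoc, nonsing_inv_mul _ hX, Matrix.mul_one]

lemma isIdempotentElem_hatMatrix : IsIdempotentElem (hatMatrix X) := by
  rw [IsIdempotentElem]
  nth_rw 2 [hatMatrix]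
  rw [← Matrix.mul_assoc, ← Matrix.mul_assoc, hatMatrix_mul_self hX, hatMatrix]

lemma dotProduct_hatMatrix_mulVec_of_mem_range (v : n → ℝ) (ε : m → ℝ) :
    (X *ᵥ v) ⬝ᵥ (hatMatrix X *ᵥ ε) = (X *ᵥ v) ⬝ᵥ ε := by
  rw [dotProduct_mulVec, ← mulVec_transpose, transpose_hatMatrix, mulVec_mulVec,
    hatMatrix_mul_self hX]

lemma dotProduct_gram_inv_mulVec (u : n → ℝ) :
    u ⬝ᵥ ((Xᵀ * X)⁻¹ *ᵥ u) = (X *ᵥ ((Xᵀ * X)⁻¹ *ᵥ u)) ⬝ᵥ (X *ᵥ ((Xᵀ * X)⁻¹ *ᵥ u)) := by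
  rw [dotProduct_mulVec _ X, ← mulVec_transpose, mulVec_mulVec, mulVec_mulVec,
    mul_nonsing_inv _ hX, one_mulVec, dotProduct_comm]

lemma lsq_of_eq_add {μ : n → ℝ} {ε y : m → ℝ} (hy : y = X *ᵥ μ + ε) :
    (Xᵀ * X)⁻¹ *ᵥ (Xᵀ *ᵥ y) = μ + (Xᵀ * X)⁻¹ *ᵥ (Xᵀ *ᵥ ε) := by
  rw [hy, mulVec_add, mulVec_add, mulVec_mulVec, mulVec_mulVec, Matrix.mul_assoc,
    nonsing_inv_mul _ hX, one_mulVec]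

lemma one_sub_dotProduct_lsq {u μ : n → ℝ} (hμ : u ⬝ᵥ μ = 1) {ε y : m → ℝ}
    (hy : y = X *ᵥ μ + ε) :
    1 - u ⬝ᵥ ((Xᵀ * X)⁻¹ *ᵥ (Xᵀ *ᵥ y)) = -((X *ᵥ ((Xᵀ * X)⁻¹ *ᵥ u)) ⬝ᵥ ε) := by
  rw [lsq_of_eq_add hX hy, dotProduct_add, hμ, dotProduct_mulVec, ← mulVec_transpose,
    transpose_gram_inv, dotProduct_mulVec, ← mulVec_transpose, transpose_transpose]
  ring

theorem sq_one_sub_dotProduct_lsq_div_le {u μ : n → ℝ} (hμ : u ⬝ᵥ μ = 1) {ε y : m → ℝ}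
    (hy : y = X *ᵥ μ + ε) :
    (1 - u ⬝ᵥ ((Xᵀ * X)⁻¹ *ᵥ (Xᵀ *ᵥ y))) ^ 2 / (u ⬝ᵥ ((Xᵀ * X)⁻¹ *ᵥ u)) ≤
      ε ⬝ᵥ (hatMatrix X *ᵥ ε) := by
  rw [one_sub_dotProduct_lsq hX hμ hy, neg_sq, dotProduct_gram_inv_mulVec hX,
    ← dotProduct_hatMatrix_mulVec_of_mem_range hX,
    dotProduct_mulVec_self_of_isIdempotentElem (transpose_hatMatrix X)
      (isIdempotentElem_hatMatrix hX)]
  exact sq_dotProduct_div_le _ _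

end LeastSquares

/-- Lemma S5: if `y = X_{γ*}μ* + ε` with `𝟙ᵀμ* = 1`, then
`b_{γ*} = (1 − 𝟙ᵀμ̂_{γ*})²/(𝟙ᵀ(X_{γ*}ᵀX_{γ*})⁻¹𝟙) ≤ εᵀH_{γ*}ε`; in particular, if
`εᵀH_{γ*}ε ≤ σ²ℓ* log N`, then `b_{γ*} ≤ σ²ℓ* log N`. -/
theorem statement_11 {M ℓ N : ℕ} (Xs : Matrix (Fin M) (Fin ℓ) ℝ)
    (hX : IsUnit (Xsᵀ * Xs).det)
    (μstar : Fin ℓ → ℝ) (hμ : (fun _ => (1 : ℝ)) ⬝ᵥ μstar = 1)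
    (ε : Fin M → ℝ) (y : Fin M → ℝ) (hy : y = Xs *ᵥ μstar + ε) (σ : ℝ) :
    let μhat := (Xsᵀ * Xs)⁻¹ *ᵥ (Xsᵀ *ᵥ y)
    let H := Xs * (Xsᵀ * Xs)⁻¹ * Xsᵀ
    let b := (1 - (fun _ => (1 : ℝ)) ⬝ᵥ μhat) ^ 2 /
      ((fun _ => (1 : ℝ)) ⬝ᵥ ((Xsᵀ * Xs)⁻¹ *ᵥ fun _ => (1 : ℝ)))
    b ≤ ε ⬝ᵥ (H *ᵥ ε) ∧
      (ε ⬝ᵥ (H *ᵥ ε) ≤ σ ^ 2 * ℓ * Real.log N → b ≤ σ ^ 2 * ℓ * Real.log N) := by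
  intro μhat H b
  have hb : b ≤ ε ⬝ᵥ (H *ᵥ ε) := sq_one_sub_dotProduct_lsq_div_le hX hμ hy
  exact ⟨hb, hb.trans⟩
end
end
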